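/- Let Ω ⊆ ℝ² be a measurable set of finite Lebesgue measure, I a finite index set, and φ_i : ℝ² → ℝ, i ∈ I, twice continuously differentiable functions on an open set containing Ω with Σ_{i∈I} φ_i = 1 there, such that each φ_i and each ∇φ_i is bounded on Ω. Define ψ_{ij} := φ_i ∇φ_j − φ_j ∇φ_i and ψ_{ijk} := φ_i (∇φ_j × ∇φ_k) − φ_j (∇φ_i × ∇φ_k) − φ_k (∇φ_j × ∇φ_i), where a × b := a₁b₂ − a₂b₁. Then for all indices a, b, c, i, j ∈ I with i ≠ j, (ψ_{abc}, ∇×ψ_{ij})_{L²(Ω)} = 2 Σ_{k∈I, k∉{i,j}} (ψ_{abc}, ψ_{ijk})_{L²(Ω)}, where ∇×F := ∂₁F₂ − ∂₂F₁ is the scalar curl and (f, g)_{L²(Ω)} := ∫_Ω f g dx for scalar functions. -/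

import Mathlib

/-!
Differentiating the components of `ψᵢⱼ = φᵢ ∇φⱼ - φⱼ ∇φᵢ`, the second-derivative terms cancel by
symmetry of the Hessian and the first-order ones give `∇×ψᵢⱼ = 2 ∇φᵢ × ∇φⱼ`. On the other hand
`∑ φₖ = 1` forces `∑ ∇φₖ = 0`, so by bilinearity of `×` the sum `∑ₖ ψᵢⱼₖ` collapses to
`∇φᵢ × ∇φⱼ`, and its terms `k = i`, `k = j` vanish. Multiplying by `ψ_abc` and integrating is
legitimate because all these forms are continuous and bounded on `Ω`, which has finite measure.
-/

open MeasureTheory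

/-- The planar cross product `a × b := a₁ b₂ - a₂ b₁` of two vectors in `ℝ²`. -/
def cross2 (a b : EuclideanSpace ℝ (Fin 2)) : ℝ := a 0 * b 1 - a 1 * b 0

/-- The partial derivative `∂ᵢ f x` of a scalar function on `ℝ²`. -/
noncomputable def pderiv2 (i : Fin 2) (f : EuclideanSpace ℝ (Fin 2) → ℝ)
    (x : EuclideanSpace ℝ (Fin 2)) : ℝ :=
  fderiv ℝ f x (EuclideanSpace.single i 1)

/-- The scalar curl `∇×F := ∂₁F₂ - ∂₂F₁` of a planar vector field `F = (F₁, F₂)`. -/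
noncomputable def scurl (F : EuclideanSpace ℝ (Fin 2) → EuclideanSpace ℝ (Fin 2))
    (x : EuclideanSpace ℝ (Fin 2)) : ℝ :=
  pderiv2 0 (fun y => F y 1) x - pderiv2 1 (fun y => F y 0) x

open Filter Asymptotics Topology

local notation "ℝ²" => EuclideanSpace ℝ (Fin 2)

section Algebra

variable {I : Type*}

theorem cross2_sum_right {ι : Type*} (a : ℝ²) (s : Finset ι) (v : ι → ℝ²) :
    cross2 a (∑ k ∈ s, v k) = ∑ k ∈ s, cross2 a (v k) := by
  simp [cross2, Finset.mul_sum, Finset.sum_sub_distrib]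

/-- The second-order Whitney form `ψᵢⱼₖ` at a point where the `φ`'s take the values `p` and
their gradients the values `v`. -/
def whitney₃ (p : I → ℝ) (v : I → ℝ²) (i j k : I) : ℝ :=
  p i * cross2 (v j) (v k) - p j * cross2 (v i) (v k) - p k * cross2 (v j) (v i)

theorem whitney₃_eq_zero_of_eq (p : I → ℝ) (v : I → ℝ²) {i j k : I} (hk : k = i ∨ k = j) :
    whitney₃ p v i j k = 0 := by
  rcases hk with rfl | rfl <;> (simp only [whitney₃, cross2]; ring)

theorem sum_whitney₃ [Fintype I] {p : I → ℝ} {v : I → ℝ²} (hp : ∑ k, p k = 1)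
    (hv : ∑ k, v k = 0) (i j : I) : ∑ k, whitney₃ p v i j k = cross2 (v i) (v j) := by
  simp only [whitney₃, Finset.sum_sub_distrib, ← Finset.mul_sum, ← Finset.sum_mul,
    ← cross2_sum_right, hp, hv]
  simp [cross2]
  ring

theorem sum_filter_whitney₃ [Fintype I] [DecidableEq I] {p : I → ℝ} {v : I → ℝ²}
    (hp : ∑ k, p k = 1) (hv : ∑ k, v k = 0) (i j : I) :
    ∑ k ∈ Finset.univ.filter (fun k => k ≠ i ∧ k ≠ j), whitney₃ p v i j k
      = cross2 (v i) (v j) := by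
  rw [Finset.sum_filter_of_ne fun k _ hk => ?_, sum_whitney₃ hp hv]
  contrapose! hk
  exact whitney₃_eq_zero_of_eq p v (or_iff_not_imp_left.2 hk)

end Algebra

section Calculus

variable {f g : ℝ² → ℝ} {x : ℝ²}

theorem gradient_apply_eq_pderiv2 (f : ℝ² → ℝ) (x : ℝ²) (m : Fin 2) :
    gradient f x m = pderiv2 m f x := by
  rw [pderiv2, ← inner_gradient_left, EuclideanSpace.inner_single_right]
  simp

theorem hasFDerivAt_mul_pderiv2 (hf : ContDiffAt ℝ 2 f x) (hg : ContDiffAt ℝ 2 g x) (m : Fin 2) :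
    HasFDerivAt (fun y => f y * pderiv2 m g y)
      (f x • (fderiv ℝ (fderiv ℝ g) x).flip (EuclideanSpace.single m 1)
        + pderiv2 m g x • fderiv ℝ f x) x := by
  have hg' : HasFDerivAt (fderiv ℝ g) (fderiv ℝ (fderiv ℝ g) x) x :=
    ((hg.fderiv_right (m := 1) le_rfl).differentiableAt one_ne_zero).hasFDerivAt
  simpa [pderiv2] using (hf.differentiableAt two_ne_zero).hasFDerivAt.fun_mul
    (hg'.clm_apply (hasFDerivAt_const (EuclideanSpace.single m (1 : ℝ)) x))

theorem pderiv2_whitney₁_apply (hf : ContDiffAt ℝ 2 f x) (hg : ContDiffAt ℝ 2 g x)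
    (m n : Fin 2) :
    pderiv2 n (fun y => (f y • gradient g y - g y • gradient f y) m) x
      = f x * fderiv ℝ (fderiv ℝ g) x (EuclideanSpace.single n 1) (EuclideanSpace.single m 1)
        + pderiv2 m g x * pderiv2 n f x
        - (g x * fderiv ℝ (fderiv ℝ f) x (EuclideanSpace.single n 1) (EuclideanSpace.single m 1)
          + pderiv2 m f x * pderiv2 n g x) := by
  have h := (hasFDerivAt_mul_pderiv2 hf hg m).fun_sub (hasFDerivAt_mul_pderiv2 hg hf m)
  simp only [PiLp.sub_apply, PiLp.smul_apply, smul_eq_mul, gradient_apply_eq_pderiv2]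
  rw [pderiv2, h.fderiv]
  simp [pderiv2]

theorem scurl_whitney₁ (hf : ContDiffAt ℝ 2 f x) (hg : ContDiffAt ℝ 2 g x) :
    scurl (fun y => f y • gradient g y - g y • gradient f y) x
      = 2 * cross2 (gradient f x) (gradient g x) := by
  have hsymm : ∀ {h : ℝ² → ℝ}, ContDiffAt ℝ 2 h x →
      fderiv ℝ (fderiv ℝ h) x (EuclideanSpace.single 1 1) (EuclideanSpace.single 0 1)
        = fderiv ℝ (fderiv ℝ h) x (EuclideanSpace.single 0 1) (EuclideanSpace.single 1 1) :=
    fun hh => (hh.isSymmSndFDerivAt (by simp [minSmoothness_of_isRCLikeNormedField])) _ _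
  rw [scurl, pderiv2_whitney₁_apply hf hg, pderiv2_whitney₁_apply hf hg, hsymm hf, hsymm hg,
    cross2, gradient_apply_eq_pderiv2, gradient_apply_eq_pderiv2, gradient_apply_eq_pderiv2,
    gradient_apply_eq_pderiv2]
  ring

end Calculus

section Gradient

variable {F : Type*} [NormedAddCommGroup F] [InnerProductSpace ℝ F] [CompleteSpace F]

theorem sum_gradient_eq_zero {ι : Type*} [Fintype ι] {φ : ι → F → ℝ} {x : F} {c : ℝ}
    (hφ : ∀ i, DifferentiableAt ℝ (φ i) x) (hsum : (fun y => ∑ i, φ i y) =ᶠ[𝓝 x] fun _ => c) :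
    ∑ i, gradient (φ i) x = 0 := by
  apply (InnerProductSpace.toDual ℝ F).injective
  rw [map_sum, map_zero]
  simp only [toDual_gradient]
  rw [← fderiv_fun_sum fun i _ => hφ i, hsum.fderiv_eq, fderiv_const_apply]

theorem ContDiffOn.continuousOn_gradient {f : F → ℝ} {s : Set F} {n : WithTop ℕ∞}
    (hf : ContDiffOn ℝ n f s) (hs : IsOpen s) (hn : 1 ≤ n) : ContinuousOn (gradient f) s :=
  (InnerProductSpace.toDual ℝ F).symm.continuous.comp_continuousOn
    (hf.continuousOn_fderiv_of_isOpen hs hn)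

end Gradient

section Bounds

variable {α I : Type*}

theorem isBigO_one_principal_iff {E : Type*} [Norm E] {f : α → E} {s : Set α} :
    (f =O[𝓟 s] fun _ => (1 : ℝ)) ↔ ∃ C, ∀ x ∈ s, ‖f x‖ ≤ C := by
  simp only [isBigO_principal, norm_one, mul_one]

theorem Asymptotics.IsBigO.cross2 {l : Filter α} {u v : α → ℝ²}
    (hu : u =O[l] fun _ => (1 : ℝ)) (hv : v =O[l] fun _ => (1 : ℝ)) :
    (fun x => cross2 (u x) (v x)) =O[l] fun _ => (1 : ℝ) := by
  have coord : ∀ {w : α → ℝ²}, w =O[l] (fun _ => (1 : ℝ)) → ∀ m : Fin 2,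
      (fun x => w x m) =O[l] fun _ => (1 : ℝ) :=
    fun {w} hw m => (isBigO_of_le l fun x => PiLp.norm_apply_le (w x) m).trans hw
  simpa [_root_.cross2] using ((coord hu 0).mul (coord hv 1)).sub ((coord hu 1).mul (coord hv 0))

theorem ContinuousOn.cross2 [TopologicalSpace α] {s : Set α} {u v : α → ℝ²}
    (hu : ContinuousOn u s) (hv : ContinuousOn v s) :
    ContinuousOn (fun x => cross2 (u x) (v x)) s := by
  unfold _root_.cross2
  fun_prop

theorem Asymptotics.IsBigO.whitney₃ {l : Filter α} {p : I → α → ℝ} {v : I → α → ℝ²}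
    (hp : ∀ i, p i =O[l] fun _ => (1 : ℝ)) (hv : ∀ i, v i =O[l] fun _ => (1 : ℝ)) (i j k : I) :
    (fun x => _root_.whitney₃ (p · x) (v · x) i j k) =O[l] fun _ => (1 : ℝ) := by
  simpa [_root_.whitney₃] using
    (((hp i).mul ((hv j).cross2 (hv k))).sub ((hp j).mul ((hv i).cross2 (hv k)))).sub
      ((hp k).mul ((hv j).cross2 (hv i)))

theorem ContinuousOn.whitney₃ [TopologicalSpace α] {s : Set α} {p : I → α → ℝ}
    {v : I → α → ℝ²} (hp : ∀ i, ContinuousOn (p i) s) (hv : ∀ i, ContinuousOn (v i) s)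
    (i j k : I) : ContinuousOn (fun x => _root_.whitney₃ (p · x) (v · x) i j k) s :=
  (((hp i).mul ((hv j).cross2 (hv k))).sub ((hp j).mul ((hv i).cross2 (hv k)))).sub
    ((hp k).mul ((hv j).cross2 (hv i)))

theorem integrableOn_of_isBigO_one {E : Type*} [MeasurableSpace α] [NormedAddCommGroup E]
    {μ : Measure α} {f : α → E} {s : Set α} (hs : MeasurableSet s) (hμ : μ s < ⊤)
    (hm : AEStronglyMeasurable f (μ.restrict s)) (hf : f =O[𝓟 s] fun _ => (1 : ℝ)) :
    IntegrableOn f s μ := by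
  obtain ⟨C, hC⟩ := isBigO_one_principal_iff.1 hf
  exact ⟨hm, .restrict_of_bounded C hμ ((ae_restrict_iff' hs).2 (ae_of_all _ hC))⟩

end Bounds

theorem whitney_variational_curl_general
    {I : Type*} [Fintype I] [DecidableEq I]
    (Ω U : Set (EuclideanSpace ℝ (Fin 2))) (hU : IsOpen U) (hΩU : Ω ⊆ U)
    (hmeas : MeasurableSet Ω) (hfin : volume Ω < ⊤)
    (φ : I → EuclideanSpace ℝ (Fin 2) → ℝ)
    (hC2 : ∀ i, ContDiffOn ℝ 2 (φ i) U)
    (hsum : ∀ x ∈ U, ∑ i, φ i x = 1)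
    (hbφ : ∀ i, ∃ C : ℝ, ∀ x ∈ Ω, |φ i x| ≤ C)
    (hbg : ∀ i, ∃ C : ℝ, ∀ x ∈ Ω, ‖gradient (φ i) x‖ ≤ C)
    (ψ₂ : I → I → EuclideanSpace ℝ (Fin 2) → EuclideanSpace ℝ (Fin 2))
    (hψ₂ : ∀ i j x, ψ₂ i j x = φ i x • gradient (φ j) x - φ j x • gradient (φ i) x)
    (ψ₃ : I → I → I → EuclideanSpace ℝ (Fin 2) → ℝ)
    (hψ₃ : ∀ i j k x, ψ₃ i j k x
      = φ i x * cross2 (gradient (φ j) x) (gradient (φ k) x)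
        - φ j x * cross2 (gradient (φ i) x) (gradient (φ k) x)
        - φ k x * cross2 (gradient (φ j) x) (gradient (φ i) x))
    (a b c i j : I) :
    (∫ x in Ω, ψ₃ a b c x * scurl (ψ₂ i j) x)
      = 2 * ∑ k ∈ Finset.univ.filter (fun k => k ≠ i ∧ k ≠ j),
          ∫ x in Ω, ψ₃ a b c x * ψ₃ i j k x := by
  have hψ₃_whitney : ∀ i j k,
      ψ₃ i j k = fun x => whitney₃ (φ · x) (fun l => gradient (φ l) x) i j k :=
    fun i j k => funext (hψ₃ i j k)
  have hφ : ∀ x ∈ U, ∀ l, ContDiffAt ℝ 2 (φ l) x :=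
    fun x hx l => (hC2 l).contDiffAt (hU.mem_nhds hx)
  have hcurl : ∀ x ∈ Ω, ψ₃ a b c x * scurl (ψ₂ i j) x
      = 2 * ∑ k ∈ Finset.univ.filter (fun k => k ≠ i ∧ k ≠ j), ψ₃ a b c x * ψ₃ i j k x := by
    intro x hx
    have hsum_grad : ∑ l, gradient (φ l) x = 0 :=
      sum_gradient_eq_zero (fun l => (hφ x (hΩU hx) l).differentiableAt two_ne_zero)
        (eventually_of_mem (hU.mem_nhds (hΩU hx)) hsum)
    rw [funext (hψ₂ i j), scurl_whitney₁ (hφ x (hΩU hx) i) (hφ x (hΩU hx) j), ← Finset.mul_sum]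
    simp only [hψ₃_whitney i j, sum_filter_whitney₃ (hsum x (hΩU hx)) hsum_grad]
    ring
  have hint : ∀ k, IntegrableOn (fun x => ψ₃ a b c x * ψ₃ i j k x) Ω := by
    have hcont : ∀ i j k, ContinuousOn (ψ₃ i j k) Ω := fun i j k => hψ₃_whitney i j k ▸
      ContinuousOn.whitney₃ (fun l => (hC2 l).continuousOn.mono hΩU)
        (fun l => ((hC2 l).continuousOn_gradient hU one_le_two).mono hΩU) i j k
    have hbdd : ∀ i j k, ψ₃ i j k =O[𝓟 Ω] fun _ => (1 : ℝ) := fun i j k => hψ₃_whitney i j k ▸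
      IsBigO.whitney₃ (fun l => isBigO_one_principal_iff.2 (hbφ l))
        (fun l => isBigO_one_principal_iff.2 (hbg l)) i j k
    exact fun k => integrableOn_of_isBigO_one hmeas hfin
      (((hcont a b c).mul (hcont i j k)).aestronglyMeasurable hmeas)
      (by simpa using (hbdd a b c).mul (hbdd i j k))
  rw [setIntegral_congr_fun hmeas hcurl, integral_const_mul,
    integral_finsetSum _ fun k _ => hint k]

/-- For a `C²` partition of unity `{φ i}` on an open neighborhood `U` of a
measurable set `Ω ⊆ ℝ²` of finite measure, with `φ i` and `∇φ i` bounded on `Ω`, the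
first- and second-order Whitney forms satisfy the variational curl identity
`(ψ₃ a b c, ∇×ψ₂ i j)_{L²(Ω)} = 2 ∑_{k ∉ {i,j}} (ψ₃ a b c, ψ₃ i j k)_{L²(Ω)}`. -/
theorem whitney_variational_curl
    {I : Type*} [Fintype I] [DecidableEq I]
    (Ω U : Set (EuclideanSpace ℝ (Fin 2))) (hU : IsOpen U) (hΩU : Ω ⊆ U)
    (hmeas : MeasurableSet Ω) (hfin : volume Ω < ⊤)
    (φ : I → EuclideanSpace ℝ (Fin 2) → ℝ)
    (hC2 : ∀ i, ContDiffOn ℝ 2 (φ i) U)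
    (hsum : ∀ x ∈ U, ∑ i, φ i x = 1)
    (hbφ : ∀ i, ∃ C : ℝ, ∀ x ∈ Ω, |φ i x| ≤ C)
    (hbg : ∀ i, ∃ C : ℝ, ∀ x ∈ Ω, ‖gradient (φ i) x‖ ≤ C)
    (ψ₂ : I → I → EuclideanSpace ℝ (Fin 2) → EuclideanSpace ℝ (Fin 2))
    (hψ₂ : ∀ i j x, ψ₂ i j x = φ i x • gradient (φ j) x - φ j x • gradient (φ i) x)
    (ψ₃ : I → I → I → EuclideanSpace ℝ (Fin 2) → ℝ)
    (hψ₃ : ∀ i j k x, ψ₃ i j k x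
      = φ i x * cross2 (gradient (φ j) x) (gradient (φ k) x)
        - φ j x * cross2 (gradient (φ i) x) (gradient (φ k) x)
        - φ k x * cross2 (gradient (φ j) x) (gradient (φ i) x))
    (a b c i j : I) (hij : i ≠ j) :
    (∫ x in Ω, ψ₃ a b c x * scurl (ψ₂ i j) x)
      = 2 * ∑ k ∈ Finset.univ.filter (fun k => k ≠ i ∧ k ≠ j),
          ∫ x in Ω, ψ₃ a b c x * ψ₃ i j k x :=
  whitney_variational_curl_general Ω U hU hΩU hmeas hfin φ hC2 hsum hbφ hbg ψ₂ hψ₂ ψ₃ hψ₃ a b c i j
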